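/- Let Γ = {σ a k-algebra automorphism of A_{q,n} : σ(x_1) = x_1 and σ(x_i) − x_i ∈ S for all i = 2, …, q}, where S is the k-linear span of x_1², …, x_1^{n−1} in A_{q,n}. Then the multiplication (composition) map Γ × (I_{q,n} ∩ G_1) → I_{q,n}, (γ, σ) ↦ γ ∘ σ, is a bijection. -/

import Mathlib

set_option synthInstance.maxHeartbeats 400000

noncomputable section

/-- The ring of `n`-nil polynomials `A_{q,n} = k[x_1,…,x_q]/m_0^n`. -/
abbrev Aqn (k : Type) [Field k] (q n : ℕ) : Type :=
  MvPolynomial (Fin q) k ⧸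
    (Ideal.span (Set.range (MvPolynomial.X : Fin q → MvPolynomial (Fin q) k))) ^ n

/-- The image of the variable `x_i` in `A_{q,n}`. -/
def xA (k : Type) [Field k] (q n : ℕ) (i : Fin q) : Aqn k q n :=
  Ideal.Quotient.mk _ (MvPolynomial.X i)

/-- The maximal ideal `m` of `A_{q,n}` generated by `x_1, …, x_q`. -/
def mA (k : Type) [Field k] (q n : ℕ) : Ideal (Aqn k q n) :=
  Ideal.span (Set.range (xA k q n))

/-- The ideal `q_1` of `A_{q,n}` generated by `x_2, …, x_q`. -/
def q1A (k : Type) [Field k] (q n : ℕ) [NeZero q] : Ideal (Aqn k q n) :=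
  Ideal.span {y | ∃ i : Fin q, i ≠ 0 ∧ y = xA k q n i}

/-- The `k`-linear span `S` of `x_1², …, x_1^(n-1)` in `A_{q,n}`. -/
def SA (k : Type) [Field k] (q n : ℕ) [NeZero q] : Submodule k (Aqn k q n) :=
  Submodule.span k {y | ∃ j : ℕ, 2 ≤ j ∧ j ≤ n - 1 ∧ y = xA k q n 0 ^ j}

/-- The group `I_{q,n}` of linearly trivial automorphisms, as a set. -/
def IqnSet (k : Type) [Field k] (q n : ℕ) : Set (Aqn k q n ≃ₐ[k] Aqn k q n) :=
  {σ | ∀ i, σ (xA k q n i) - xA k q n i ∈ (mA k q n) ^ 2}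

/-- The stabilizer `G_1` of the ideal `q_1`, as a set. -/
def G1Set (k : Type) [Field k] (q n : ℕ) [NeZero q] : Set (Aqn k q n ≃ₐ[k] Aqn k q n) :=
  {σ | Ideal.map σ (q1A k q n) = q1A k q n}

/-- The subgroup `Γ` of automorphisms fixing `x_1` and moving each `x_i` (`i ≥ 2`) by an
element of the span `S` of `x_1², …, x_1^(n-1)`, as a set. -/
def GammaSet (k : Type) [Field k] (q n : ℕ) [NeZero q] :
    Set (Aqn k q n ≃ₐ[k] Aqn k q n) :=
  {σ | σ (xA k q n 0) = xA k q n 0 ∧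
    ∀ i : Fin q, i ≠ 0 → σ (xA k q n i) - xA k q n i ∈ SA k q n}

/-!
Here `x₁` is `xA k q n 0`. For `σ ∈ I_{q,n}` put `J = σ • q₁`. Since `x_i = σ x_i - (σ x_i - x_i)`,
`m ≤ (x₁) + J + m²`; with `A = k + m` this gives `m^t ≤ k x₁^t + J + m^(t+1)`, and descending
induction from `m^n = 0` yields `m² ⊆ S + J`. So there are `s_i ∈ S` with `x_i + s_i ∈ J`, and the
`γ ∈ Γ` with `γ x_i = x_i + s_i` satisfies `γ • q₁ ≤ σ • q₁`, an equality because `A` is Noetherian;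
thus `γ⁻¹ σ ∈ G₁`. Conversely `γ ∈ Γ` is determined by `γ • q₁`, because `S ∩ q₁ = 0`: the
endomorphism `x₁ ↦ x₁, x_i ↦ 0` fixes `S` and kills `q₁`. Finally `m` is the nilradical, so every
endomorphism preserves it and `I_{q,n}` is a group containing `Γ`.
-/

open scoped Pointwise

theorem Ideal.pointwise_smul_eq_of_le {M R : Type*} [Group M] [Semiring R] [MulSemiringAction M R]
    [IsNoetherianRing R] {g : M} {I : Ideal R} (h : g • I ≤ I) : g • I = I := by
  suffices ∀ J : Ideal R, ¬ g • J < J from h.eq_of_not_lt (this I)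
  intro J
  induction J using WellFoundedGT.induction with
  | _ J ih =>
    intro hlt
    have hJ : J < g⁻¹ • J :=
      lt_of_le_of_ne (Ideal.pointwise_smul_subset_iff.mp hlt.le) fun he =>
        hlt.ne (eq_inv_smul_iff.mp he)
    exact ih _ hJ (by rwa [smul_inv_smul])

section Approximation

variable {k A : Type*} [CommSemiring k] [CommRing A] [Algebra k A] {m J : Ideal A} {x : A}

theorem Ideal.pow_succ_le_span_pow_sup (hx : x ∈ m) (hm : m ≤ Ideal.span {x} ⊔ J ⊔ m ^ 2)
    (t : ℕ) : m ^ (t + 1) ≤ Ideal.span {x ^ (t + 1)} ⊔ J ⊔ m ^ (t + 2) := by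
  induction t with
  | zero => simpa using hm
  | succ t ih =>
    have hxt : Ideal.span {x ^ (t + 1)} ≤ m ^ (t + 1) :=
      (Ideal.span_singleton_le_iff_mem _).mpr (Ideal.pow_mem_pow hx _)
    have hspan : Ideal.span {x ^ (t + 1)} * m ≤ Ideal.span {x ^ (t + 2)} ⊔ J ⊔ m ^ (t + 3) := by
      calc Ideal.span {x ^ (t + 1)} * m
          ≤ Ideal.span {x ^ (t + 1)} * (Ideal.span {x} ⊔ J ⊔ m ^ 2) := Ideal.mul_mono_right hm
        _ = Ideal.span {x ^ (t + 2)} ⊔ Ideal.span {x ^ (t + 1)} * J ⊔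
              Ideal.span {x ^ (t + 1)} * m ^ 2 := by
          rw [Ideal.mul_sup, Ideal.mul_sup, Ideal.span_singleton_mul_span_singleton, ← pow_succ]
        _ ≤ Ideal.span {x ^ (t + 2)} ⊔ J ⊔ m ^ (t + 3) := by
          refine sup_le_sup (sup_le_sup_left Ideal.mul_le_right _) ?_
          calc Ideal.span {x ^ (t + 1)} * m ^ 2 ≤ m ^ (t + 1) * m ^ 2 := Ideal.mul_mono_left hxt
            _ = m ^ (t + 3) := by rw [← pow_add]
    calc m ^ (t + 1 + 1) = m ^ (t + 1) * m := pow_succ _ _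
      _ ≤ (Ideal.span {x ^ (t + 1)} ⊔ J ⊔ m ^ (t + 2)) * m := Ideal.mul_mono_left ih
      _ = Ideal.span {x ^ (t + 1)} * m ⊔ J * m ⊔ m ^ (t + 3) := by
        rw [Ideal.sup_mul, Ideal.sup_mul, ← pow_succ]
      _ ≤ Ideal.span {x ^ (t + 1 + 1)} ⊔ J ⊔ m ^ (t + 1 + 2) :=
        sup_le (sup_le hspan (le_sup_of_le_left (le_sup_of_le_right Ideal.mul_le_left)))
          le_sup_right

theorem Ideal.exists_sub_smul_pow_mem_sup (hx : x ∈ m) (hm : m ≤ Ideal.span {x} ⊔ J ⊔ m ^ 2)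
    (hres : ∀ a : A, ∃ c : k, a - algebraMap k A c ∈ m) {t : ℕ} {a : A} (ha : a ∈ m ^ (t + 1)) :
    ∃ c : k, a - c • x ^ (t + 1) ∈ J ⊔ m ^ (t + 2) := by
  have ha' := Ideal.pow_succ_le_span_pow_sup hx hm t ha
  rw [sup_assoc] at ha'
  obtain ⟨u, hu, v, hv, rfl⟩ := Submodule.mem_sup.mp ha'
  obtain ⟨r, rfl⟩ := Ideal.mem_span_singleton'.mp hu
  obtain ⟨c, hc⟩ := hres r
  refine ⟨c, ?_⟩
  have hrx : (r - algebraMap k A c) * x ^ (t + 1) ∈ m ^ (t + 2) := by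
    rw [pow_succ' m (t + 1)]
    exact Ideal.mul_mem_mul hc (Ideal.pow_mem_pow hx _)
  have : r * x ^ (t + 1) + v - c • x ^ (t + 1) = v + (r - algebraMap k A c) * x ^ (t + 1) := by
    rw [Algebra.smul_def]; ring
  rw [this]
  exact add_mem hv (Ideal.mem_sup_right hrx)

theorem Ideal.exists_mem_span_pow_sub_mem {N : ℕ} (hx : x ∈ m) (hm : m ≤ Ideal.span {x} ⊔ J ⊔ m ^ 2)
    (hres : ∀ a : A, ∃ c : k, a - algebraMap k A c ∈ m) (hnil : m ^ N = ⊥) (t : ℕ) {a : A}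
    (ha : a ∈ m ^ (t + 1)) :
    ∃ s ∈ Submodule.span k ((x ^ ·) '' Set.Ici (t + 1)), a - s ∈ J := by
  induction h : N - t generalizing t a with
  | zero =>
    have : a = 0 := by
      simpa [hnil] using Ideal.pow_le_pow_right (by omega : N ≤ t + 1) ha
    exact ⟨0, zero_mem _, by simp [this]⟩
  | succ d ih =>
    obtain ⟨c, hc⟩ := Ideal.exists_sub_smul_pow_mem_sup hx hm hres ha
    obtain ⟨j, hj, b, hb, hjb⟩ := Submodule.mem_sup.mp hc
    obtain ⟨s, hs, hbs⟩ := ih (t + 1) hb (by omega)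
    refine ⟨c • x ^ (t + 1) + s, add_mem ?_ ?_, ?_⟩
    · exact Submodule.smul_mem _ _ (Submodule.subset_span ⟨t + 1, Set.mem_Ici.mpr le_rfl, rfl⟩)
    · refine Submodule.span_mono (Set.image_mono ?_) hs
      exact Set.Ici_subset_Ici.mpr (by omega)
    · have : a - (c • x ^ (t + 1) + s) = j + (b - s) := by
        rw [← sub_sub, ← hjb]; ring
      rw [this]
      exact add_mem hj hbs

end Approximation

section Aqn

open MvPolynomial

variable {k : Type} [Field k] {q n : ℕ}

theorem xA_mem_mA (i : Fin q) : xA k q n i ∈ mA k q n :=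
  Ideal.subset_span ⟨i, rfl⟩

theorem mA_eq_map_idealOfVars : mA k q n = (idealOfVars (Fin q) k).map (Ideal.Quotient.mk _) := by
  rw [mA, Ideal.map_span, ← Set.range_comp]
  rfl

theorem mA_pow_eq_bot : mA k q n ^ n = ⊥ := by
  rw [mA_eq_map_idealOfVars, ← Ideal.map_pow]
  exact Ideal.map_quotient_self _

theorem exists_algebraMap_sub_mem_mA (a : Aqn k q n) :
    ∃ c : k, a - algebraMap k (Aqn k q n) c ∈ mA k q n := by
  obtain ⟨p, rfl⟩ := Ideal.Quotient.mk_surjective a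
  refine ⟨constantCoeff p, ?_⟩
  rw [mA_eq_map_idealOfVars, ← Ideal.Quotient.mk_algebraMap, ← map_sub]
  refine Ideal.mem_map_of_mem _ ?_
  rw [← pow_one (idealOfVars (Fin q) k), mem_pow_idealOfVars_iff']
  intro d hd
  obtain rfl : d = 0 := (Finsupp.degree_eq_zero_iff d).mp (by omega)
  simp [constantCoeff_eq]

theorem isNilpotent_of_mem_mA {a : Aqn k q n} (ha : a ∈ mA k q n) : IsNilpotent a :=
  ⟨n, by simpa [mA_pow_eq_bot] using Ideal.pow_mem_pow ha n⟩

theorem mem_mA_of_isNilpotent {a : Aqn k q n} (ha : IsNilpotent a) : a ∈ mA k q n := by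
  rcases subsingleton_or_nontrivial (Aqn k q n) with _ | _
  · rw [Subsingleton.elim a 0]
    exact zero_mem _
  obtain ⟨c, hc⟩ := exists_algebraMap_sub_mem_mA a
  have hcnil : IsNilpotent (algebraMap k (Aqn k q n) c) := by
    simpa using (Commute.all _ _).isNilpotent_sub ha (isNilpotent_of_mem_mA hc)
  obtain rfl : c = 0 := by
    by_contra hc0
    exact hcnil.not_isUnit ((algebraMap k (Aqn k q n)).isUnit_map (Ne.isUnit hc0))
  simpa using hc

section RingHomClass

variable {F : Type*} [FunLike F (Aqn k q n) (Aqn k q n)] [RingHomClass F (Aqn k q n) (Aqn k q n)]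

theorem map_mA_le (f : F) : (mA k q n).map f ≤ mA k q n := by
  rw [mA, Ideal.map_span, Ideal.span_le]
  rintro _ ⟨_, ⟨i, rfl⟩, rfl⟩
  exact mem_mA_of_isNilpotent ((isNilpotent_of_mem_mA (xA_mem_mA i)).map f)

theorem apply_mem_mA_pow (f : F) (t : ℕ) {a : Aqn k q n} (ha : a ∈ mA k q n ^ t) :
    f a ∈ mA k q n ^ t := by
  have := Ideal.pow_right_mono (map_mA_le f) t
  rw [← Ideal.map_pow] at this
  exact this (Ideal.mem_map_of_mem f ha)

end RingHomClass

theorem IqnSet.trans_mem {σ τ : Aqn k q n ≃ₐ[k] Aqn k q n} (hσ : σ ∈ IqnSet k q n)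
    (hτ : τ ∈ IqnSet k q n) : σ.trans τ ∈ IqnSet k q n := by
  intro i
  have : σ.trans τ (xA k q n i) - xA k q n i =
      τ (σ (xA k q n i) - xA k q n i) + (τ (xA k q n i) - xA k q n i) := by
    simp
  rw [this]
  exact add_mem (apply_mem_mA_pow τ 2 (hσ i)) (hτ i)

theorem IqnSet.symm_mem {σ : Aqn k q n ≃ₐ[k] Aqn k q n} (hσ : σ ∈ IqnSet k q n) :
    σ.symm ∈ IqnSet k q n := by
  intro i
  have : σ.symm (xA k q n i) - xA k q n i = -σ.symm (σ (xA k q n i) - xA k q n i) := by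
    simp
  rw [this]
  exact neg_mem (apply_mem_mA_pow σ.symm 2 (hσ i))

theorem Aqn.algHom_ext {B : Type*} [Semiring B] [Algebra k B] {f g : Aqn k q n →ₐ[k] B}
    (h : ∀ i, f (xA k q n i) = g (xA k q n i)) : f = g :=
  Ideal.Quotient.algHom_ext k (MvPolynomial.algHom_ext h)

def substAlgHom (y : Fin q → Aqn k q n) (hy : ∀ i, y i ∈ mA k q n) :
    Aqn k q n →ₐ[k] Aqn k q n :=
  Ideal.Quotient.liftₐ _ (aeval y) fun p hp => by
    have : (idealOfVars (Fin q) k ^ n).map (aeval y) ≤ ⊥ := by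
      rw [Ideal.map_pow, Ideal.map_span, ← Set.range_comp, ← mA_pow_eq_bot]
      refine Ideal.pow_right_mono (Ideal.span_le.mpr ?_) n
      rintro _ ⟨i, rfl⟩
      simpa using hy i
    simpa using this (Ideal.mem_map_of_mem _ hp)

@[simp]
theorem substAlgHom_xA (y : Fin q → Aqn k q n) (hy : ∀ i, y i ∈ mA k q n) (i : Fin q) :
    substAlgHom y hy (xA k q n i) = y i := by
  show aeval y (X i) = y i
  exact aeval_X y i

variable [NeZero q]

theorem xA_mem_q1A {i : Fin q} (hi : i ≠ 0) : xA k q n i ∈ q1A k q n :=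
  Ideal.subset_span ⟨i, hi, rfl⟩

theorem xA_zero_pow_mem_SA {j : ℕ} (hj : 2 ≤ j) : xA k q n 0 ^ j ∈ SA k q n := by
  rcases le_or_gt j (n - 1) with hjn | hjn
  · exact Submodule.subset_span ⟨j, hj, hjn, rfl⟩
  · have : xA k q n 0 ^ j ∈ mA k q n ^ n :=
      Ideal.pow_le_pow_right (by omega) (Ideal.pow_mem_pow (xA_mem_mA 0) j)
    rw [mA_pow_eq_bot, Ideal.mem_bot] at this
    rw [this]
    exact zero_mem _

theorem mem_mA_sq_of_mem_SA {s : Aqn k q n} (hs : s ∈ SA k q n) : s ∈ mA k q n ^ 2 := by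
  have : SA k q n ≤ (mA k q n ^ 2).restrictScalars k := by
    rw [SA, Submodule.span_le]
    rintro _ ⟨j, hj, -, rfl⟩
    exact Ideal.pow_le_pow_right hj (Ideal.pow_mem_pow (xA_mem_mA 0) j)
  exact (Submodule.restrictScalars_mem k _ _).mp (this hs)

theorem mem_mA_of_mem_SA {s : Aqn k q n} (hs : s ∈ SA k q n) : s ∈ mA k q n :=
  Ideal.pow_le_self two_ne_zero (mem_mA_sq_of_mem_SA hs)

theorem apply_eq_self_of_mem_SA (f : Aqn k q n →ₐ[k] Aqn k q n) (hf : f (xA k q n 0) = xA k q n 0)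
    {s : Aqn k q n} (hs : s ∈ SA k q n) : f s = s :=
  LinearMap.eqOn_span (f := f.toLinearMap) (g := LinearMap.id)
    (by rintro _ ⟨j, -, -, rfl⟩; simp [hf]) hs

theorem eq_zero_of_mem_SA_of_mem_q1A {s : Aqn k q n} (hS : s ∈ SA k q n) (hq : s ∈ q1A k q n) :
    s = 0 := by
  let π := substAlgHom (Pi.single 0 (xA k q n 0)) fun i => by
    rcases eq_or_ne i 0 with rfl | hi <;> simp [*, xA_mem_mA]
  have hker : q1A k q n ≤ RingHom.ker π := by
    rw [q1A, Ideal.span_le]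
    rintro _ ⟨i, hi, rfl⟩
    simp [π, hi]
  rw [← apply_eq_self_of_mem_SA π (by simp [π]) hS]
  exact hker hq

def translateAlgHom (s : Fin q → Aqn k q n) (hs : ∀ i, s i ∈ SA k q n) :
    Aqn k q n →ₐ[k] Aqn k q n :=
  substAlgHom (fun i => xA k q n i + s i) fun i => add_mem (xA_mem_mA i) (mem_mA_of_mem_SA (hs i))

theorem translateAlgHom_xA (s : Fin q → Aqn k q n) (hs : ∀ i, s i ∈ SA k q n) (i : Fin q) :
    translateAlgHom s hs (xA k q n i) = xA k q n i + s i :=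
  substAlgHom_xA _ _ i

theorem translateAlgHom_comp_eq_id {s t : Fin q → Aqn k q n} (hs : ∀ i, s i ∈ SA k q n)
    (ht : ∀ i, t i ∈ SA k q n) (ht0 : t 0 = 0) (hst : s + t = 0) :
    (translateAlgHom t ht).comp (translateAlgHom s hs) = AlgHom.id k (Aqn k q n) := by
  refine Aqn.algHom_ext fun i => ?_
  have hfix := apply_eq_self_of_mem_SA (translateAlgHom t ht)
    (by rw [translateAlgHom_xA, ht0, add_zero]) (hs i)
  have hsti : s i + t i = 0 := congrFun hst i
  rw [AlgHom.comp_apply, translateAlgHom_xA, map_add, hfix, translateAlgHom_xA, AlgHom.id_apply]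
  linear_combination hsti

def gammaEquiv (s : Fin q → Aqn k q n) (hs : ∀ i, s i ∈ SA k q n) (h0 : s 0 = 0) :
    Aqn k q n ≃ₐ[k] Aqn k q n :=
  AlgEquiv.ofAlgHom (translateAlgHom s hs) (translateAlgHom (-s) fun i => neg_mem (hs i))
    (translateAlgHom_comp_eq_id _ _ h0 (neg_add_cancel s))
    (translateAlgHom_comp_eq_id _ _ (by simp [h0]) (add_neg_cancel s))

theorem gammaEquiv_xA (s : Fin q → Aqn k q n) (hs : ∀ i, s i ∈ SA k q n) (h0 : s 0 = 0)
    (i : Fin q) : gammaEquiv s hs h0 (xA k q n i) = xA k q n i + s i :=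
  translateAlgHom_xA s hs i

theorem gammaEquiv_mem_GammaSet (s : Fin q → Aqn k q n) (hs : ∀ i, s i ∈ SA k q n)
    (h0 : s 0 = 0) : gammaEquiv s hs h0 ∈ GammaSet k q n := by
  refine ⟨?_, fun i _ => ?_⟩
  · rw [gammaEquiv_xA, h0, add_zero]
  · rw [gammaEquiv_xA, add_sub_cancel_left]
    exact hs i

theorem GammaSet_subset_IqnSet : GammaSet k q n ⊆ IqnSet k q n := by
  rintro γ ⟨h0, hS⟩ i
  rcases eq_or_ne i 0 with rfl | hi
  · simp [h0]
  · exact mem_mA_sq_of_mem_SA (hS i hi)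

theorem GammaSet.eq_of_smul_q1A_eq {γ₁ γ₂ : Aqn k q n ≃ₐ[k] Aqn k q n}
    (h₁ : γ₁ ∈ GammaSet k q n) (h₂ : γ₂ ∈ GammaSet k q n)
    (h : γ₁ • q1A k q n = γ₂ • q1A k q n) : γ₁ = γ₂ := by
  refine AlgEquiv.coe_toAlgHom_injective (Aqn.algHom_ext fun i => ?_)
  change γ₁ (xA k q n i) = γ₂ (xA k q n i)
  rcases eq_or_ne i 0 with rfl | hi
  · rw [h₁.1, h₂.1]
  set d := γ₁ (xA k q n i) - γ₂ (xA k q n i) with hd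
  have hdS : d ∈ SA k q n := by
    simpa [hd] using sub_mem (h₁.2 i hi) (h₂.2 i hi)
  have hdJ : d ∈ γ₂ • q1A k q n :=
    sub_mem (h ▸ Ideal.smul_mem_pointwise_smul γ₁ _ _ (xA_mem_q1A hi))
      (Ideal.smul_mem_pointwise_smul γ₂ _ _ (xA_mem_q1A hi))
  have hfix : γ₂⁻¹ • d = d :=
    γ₂.symm_apply_eq.mpr (apply_eq_self_of_mem_SA γ₂.toAlgHom h₂.1 hdS).symm
  rw [Ideal.mem_pointwise_smul_iff_inv_smul_mem, hfix] at hdJ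
  exact sub_eq_zero.mp (eq_zero_of_mem_SA_of_mem_q1A hdS hdJ)

theorem mA_le_span_sup_smul_q1A_sup {σ : Aqn k q n ≃ₐ[k] Aqn k q n} (hσ : σ ∈ IqnSet k q n) :
    mA k q n ≤ Ideal.span {xA k q n 0} ⊔ σ • q1A k q n ⊔ mA k q n ^ 2 := by
  rw [mA, Ideal.span_le]
  rintro _ ⟨i, rfl⟩
  rcases eq_or_ne i 0 with rfl | hi
  · exact Ideal.mem_sup_left (Ideal.mem_sup_left (Ideal.mem_span_singleton_self _))
  · rw [← sub_sub_cancel (σ (xA k q n i)) (xA k q n i)]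
    exact sub_mem (Ideal.mem_sup_left (Ideal.mem_sup_right
      (Ideal.smul_mem_pointwise_smul σ _ _ (xA_mem_q1A hi)))) (Ideal.mem_sup_right (hσ i))

theorem exists_mem_SA_sub_mem_smul_q1A {σ : Aqn k q n ≃ₐ[k] Aqn k q n} (hσ : σ ∈ IqnSet k q n)
    {a : Aqn k q n} (ha : a ∈ mA k q n ^ 2) : ∃ s ∈ SA k q n, a - s ∈ σ • q1A k q n := by
  obtain ⟨s, hs, hsJ⟩ := Ideal.exists_mem_span_pow_sub_mem (xA_mem_mA 0)
    (mA_le_span_sup_smul_q1A_sup hσ) exists_algebraMap_sub_mem_mA mA_pow_eq_bot 1 ha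
  have hspan : Submodule.span k ((xA k q n 0 ^ ·) '' Set.Ici 2) ≤ SA k q n :=
    Submodule.span_le.mpr (by rintro _ ⟨j, hj, rfl⟩; exact xA_zero_pow_mem_SA hj)
  exact ⟨s, hspan hs, hsJ⟩

theorem exists_GammaSet_smul_q1A_eq {σ : Aqn k q n ≃ₐ[k] Aqn k q n} (hσ : σ ∈ IqnSet k q n) :
    ∃ γ ∈ GammaSet k q n, γ • q1A k q n = σ • q1A k q n := by
  have hs : ∀ i, ∃ s ∈ SA k q n, (i = 0 → s = 0) ∧ (i ≠ 0 → xA k q n i + s ∈ σ • q1A k q n) := by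
    intro i
    rcases eq_or_ne i 0 with rfl | hi
    · exact ⟨0, zero_mem _, fun _ => rfl, fun h => absurd rfl h⟩
    obtain ⟨s, hs, hsJ⟩ := exists_mem_SA_sub_mem_smul_q1A hσ (hσ i)
    refine ⟨s, hs, fun h => absurd h hi, fun _ => ?_⟩
    rw [show xA k q n i + s = σ (xA k q n i) - (σ (xA k q n i) - xA k q n i - s) by abel]
    exact sub_mem (Ideal.smul_mem_pointwise_smul σ _ _ (xA_mem_q1A hi)) hsJ
  choose s hsS hs0 hsJ using hs
  set γ := gammaEquiv s hsS (hs0 0 rfl)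
  have hle : γ • q1A k q n ≤ σ • q1A k q n := by
    rw [q1A, Ideal.smul_closure, Ideal.span_le]
    rintro _ ⟨_, ⟨i, hi, rfl⟩, rfl⟩
    change γ (xA k q n i) ∈ _
    rw [gammaEquiv_xA]
    exact hsJ i hi
  have hstab := Ideal.pointwise_smul_eq_of_le (g := σ⁻¹ * γ) (I := q1A k q n)
    (by rwa [mul_smul, Ideal.pointwise_smul_subset_iff, inv_inv])
  rw [mul_smul, inv_smul_eq_iff] at hstab
  exact ⟨γ, gammaEquiv_mem_GammaSet s hsS _, hstab⟩

end Aqn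

theorem Gamma_complement_general (k : Type) [Field k] (q n : ℕ) [NeZero q] :
    Set.BijOn
      (fun p : (Aqn k q n ≃ₐ[k] Aqn k q n) × (Aqn k q n ≃ₐ[k] Aqn k q n) =>
        AlgEquiv.trans p.2 p.1)
      (GammaSet k q n ×ˢ (IqnSet k q n ∩ G1Set k q n))
      (IqnSet k q n) := by
  refine ⟨?_, ?_, ?_⟩
  · rintro ⟨γ, τ⟩ ⟨hγ, hτ, -⟩
    exact IqnSet.trans_mem hτ (GammaSet_subset_IqnSet hγ)
  · rintro ⟨γ₁, τ₁⟩ ⟨hγ₁, -, hτ₁⟩ ⟨γ₂, τ₂⟩ ⟨hγ₂, -, hτ₂⟩ h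
    change γ₁ * τ₁ = γ₂ * τ₂ at h
    -- `Ideal.map σ I` in `G1Set` is `σ • I` by definition
    change τ₁ • q1A k q n = q1A k q n at hτ₁
    change τ₂ • q1A k q n = q1A k q n at hτ₂
    obtain rfl : γ₁ = γ₂ := GammaSet.eq_of_smul_q1A_eq hγ₁ hγ₂ <| calc
      γ₁ • q1A k q n = (γ₁ * τ₁) • q1A k q n := by rw [mul_smul, hτ₁]
      _ = (γ₂ * τ₂) • q1A k q n := by rw [h]
      _ = γ₂ • q1A k q n := by rw [mul_smul, hτ₂]
    rw [mul_left_cancel h]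
  · intro σ hσ
    obtain ⟨γ, hγ, hγσ⟩ := exists_GammaSet_smul_q1A_eq hσ
    refine ⟨(γ, γ⁻¹ * σ), ⟨hγ, IqnSet.trans_mem hσ (IqnSet.symm_mem (GammaSet_subset_IqnSet hγ)),
      ?_⟩, mul_inv_cancel_left γ σ⟩
    change (γ⁻¹ * σ) • q1A k q n = q1A k q n
    rw [mul_smul, ← hγσ, inv_smul_smul]

/-- the multiplication (composition) map
`Γ × (I_{q,n} ∩ G_1) → I_{q,n}, (γ, σ) ↦ γ ∘ σ`, is a bijection. -/
theorem Gamma_complement (k : Type) [Field k] (q n : ℕ) [NeZero q]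
    (hq : 2 ≤ q) (hn : 2 ≤ n) :
    Set.BijOn
      (fun p : (Aqn k q n ≃ₐ[k] Aqn k q n) × (Aqn k q n ≃ₐ[k] Aqn k q n) =>
        AlgEquiv.trans p.2 p.1)
      (GammaSet k q n ×ˢ (IqnSet k q n ∩ G1Set k q n))
      (IqnSet k q n) :=
  Gamma_complement_general k q n
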